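/- arXiv:1108.0294 — 2 statements merged into one kernel-verified Lean document; each statement's English description precedes it below -/
import Mathlib

section
/- Agreement implies joint optimality in relation-level dual decomposition: fix n, k ∈ ℕ, cost functions fᵢ : (Fin n → Bool) → ℝ for i ∈ Fin k, and multipliers λ : Fin k → Fin n → ℝ with Σᵢ λ i j = 0 for every j ∈ Fin n. Write ι(x) j = 1 if x j = true and 0 otherwise. Suppose there is a single assignment x* : Fin n → Bool that simultaneously minimizes every augmented subproblem, i.e., for every i and every y : Fin n → Bool, fᵢ(x*) + Σ_j λ i j · ι(x*) j ≤ fᵢ(y) + Σ_j λ i j · ι(y) j. Then x* is an optimal solution of the joint problem: Σᵢ fᵢ(x*) ≤ Σᵢ fᵢ(x) for every assignment x : Fin n → Bool. -/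
open Finset

/-! Summing the per-subprogram optimality inequalities over `i`, the multiplier terms cancel on
both sides by dual feasibility (swap the sums over `i` and `j`), leaving joint optimality. -/

section

variable {ι κ α M : Type*}

theorem sum_le_sum_of_forall_add_le_add_of_sum_eq_zero [AddCommGroup M] [PartialOrder M]
    [IsOrderedAddMonoid M] {s : Finset ι} {f g : ι → α → M} {a : α}
    (hg : ∀ y, ∑ i ∈ s, g i y = 0) (hmin : ∀ i ∈ s, ∀ y, f i a + g i a ≤ f i y + g i y)
    (x : α) : ∑ i ∈ s, f i a ≤ ∑ i ∈ s, f i x := by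
  have h := sum_le_sum fun i hi => hmin i hi x
  rwa [sum_add_distrib, sum_add_distrib, hg, hg, add_zero, add_zero] at h

theorem sum_sum_mul_eq_zero_of_sum_eq_zero [NonUnitalNonAssocSemiring M] {s : Finset ι}
    {t : Finset κ} {lam : ι → κ → M} (hlam : ∀ j ∈ t, ∑ i ∈ s, lam i j = 0) (v : κ → M) :
    ∑ i ∈ s, ∑ j ∈ t, lam i j * v j = 0 := by
  rw [sum_comm]
  exact sum_eq_zero fun j hj => by rw [← sum_mul, hlam j hj, zero_mul]

end

/-- Agreement implies joint optimality in relation-level dual decomposition: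
if a single assignment `x*` simultaneously minimizes every augmented
subproblem (with dual-feasible multipliers), then `x*` is optimal for the
joint problem. -/
theorem agreement_implies_joint_optimality (n k : ℕ)
    (f : Fin k → (Fin n → Bool) → ℝ)
    (lam : Fin k → Fin n → ℝ)
    (hfeas : ∀ j : Fin n, ∑ i : Fin k, lam i j = 0)
    (xstar : Fin n → Bool)
    (hmin : ∀ i : Fin k, ∀ y : Fin n → Bool,
      f i xstar + ∑ j : Fin n, lam i j * (if xstar j = true then (1 : ℝ) else 0)
        ≤ f i y + ∑ j : Fin n, lam i j * (if y j = true then (1 : ℝ) else 0)) :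
    ∀ x : Fin n → Bool, ∑ i : Fin k, f i xstar ≤ ∑ i : Fin k, f i x :=
  sum_le_sum_of_forall_add_le_add_of_sum_eq_zero
    (fun y => sum_sum_mul_eq_zero_of_sum_eq_zero (fun j _ => hfeas j)
      fun j => if y j = true then 1 else 0)
    (fun i _ => hmin i)
end

section
/- Every discrete exponential family distribution over Boolean vectors is realized by a Markov Logic Network: fix n, d ∈ ℕ, a parameter vector θ : Fin d → ℝ and a binary feature map φ : (Fin n → Bool) → Fin d → Bool. Then there exist natural numbers N₁, N₂ with N₁ + N₂ ≤ d · 2ⁿ, nonnegative weights a : Fin N₁ → ℝ and b : Fin N₂ → ℝ (all aᵢ ≥ 0 and bⱼ ≥ 0), target assignments p : Fin N₁ → (Fin n → Bool) and q : Fin N₂ → (Fin n → Bool), and a constant c ∈ ℝ, such that defining the MLN cost of an assignment x : Fin n → Bool by cost(x) = Σᵢ aᵢ · (1 if x = pᵢ else 0) + Σⱼ bⱼ · (0 if x = qⱼ else 1), one has for every x: Σ_{i : Fin d} θ i · (1 if φ x i = true else 0) = cost(x) + c; consequently the two Gibbs distributions coincide: for every x, exp(−cost(x)) / Σ_y exp(−cost(y))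 = exp(−Σᵢ θ i · (1 if φ x i else 0)) / Σ_y exp(−Σᵢ θ i · (1 if φ y i else 0)), where both sums over y range over all 2ⁿ Boolean assignments. -/
open Finset

set_option maxHeartbeats 4000000

lemma gibbs_eq {α : Type*} [Fintype α] (f g : α → ℝ) (c : ℝ)
    (h : ∀ x, g x = f x + c) (x : α) :
    Real.exp (-(f x)) / ∑ y, Real.exp (-(f y))
      = Real.exp (-(g x)) / ∑ y, Real.exp (-(g y)) := by
  have hg : ∀ y, Real.exp (-(g y)) = Real.exp (-(f y)) * Real.exp (-c) := by
    intro y; rw [← Real.exp_add]; congr 1; rw [h y]; ring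
  rw [hg x]
  have : ∑ y, Real.exp (-(g y)) = (∑ y, Real.exp (-(f y))) * Real.exp (-c) := by
    simp only [hg, Finset.sum_mul]
  rw [this, mul_div_mul_right _ _ (Real.exp_ne_zero _)]

/-- Every discrete exponential family distribution over Boolean vectors is
realized by a Markov Logic Network: the exponential-family energy
`Σ θ i * φ x i` equals an MLN cost (a nonnegative combination of
single-falsifying-assignment disjunction costs and
single-satisfying-assignment conjunction costs) up to an additive constant,
and hence the two Gibbs distributions coincide. -/
theorem exponential_family_realized_by_MLN (n d : ℕ)
    (θ : Fin d → ℝ) (φ : (Fin n → Bool) → Fin d → Bool) :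
    ∃ (N₁ N₂ : ℕ), N₁ + N₂ ≤ d * 2 ^ n ∧
    ∃ (a : Fin N₁ → ℝ) (b : Fin N₂ → ℝ)
      (p : Fin N₁ → (Fin n → Bool)) (q : Fin N₂ → (Fin n → Bool)) (c : ℝ),
      (∀ i, 0 ≤ a i) ∧ (∀ j, 0 ≤ b j) ∧
      (∀ x : Fin n → Bool,
        ∑ i : Fin d, θ i * (if φ x i = true then (1 : ℝ) else 0)
          = ((∑ i : Fin N₁, a i * (if x = p i then (1 : ℝ) else 0))
              + ∑ j : Fin N₂, b j * (if x = q j then (0 : ℝ) else 1)) + c) ∧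
      (∀ x : Fin n → Bool,
        Real.exp (-((∑ i : Fin N₁, a i * (if x = p i then (1 : ℝ) else 0))
              + ∑ j : Fin N₂, b j * (if x = q j then (0 : ℝ) else 1)))
          / (∑ y : Fin n → Bool,
              Real.exp (-((∑ i : Fin N₁, a i * (if y = p i then (1 : ℝ) else 0))
                + ∑ j : Fin N₂, b j * (if y = q j then (0 : ℝ) else 1))))
        = Real.exp (-(∑ i : Fin d, θ i * (if φ x i = true then (1 : ℝ) else 0)))
          / ∑ y : Fin n → Bool,
              Real.exp (-(∑ i : Fin d, θ i * (if φ y i = true then (1 : ℝ) else 0)))) := by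
  classical
  set S₁ : Finset (Fin d × (Fin n → Bool)) :=
    Finset.univ.filter (fun pr => φ pr.2 pr.1 = true ∧ 0 ≤ θ pr.1) with hS₁
  set S₂ : Finset (Fin d × (Fin n → Bool)) :=
    Finset.univ.filter (fun pr => φ pr.2 pr.1 = true ∧ θ pr.1 < 0) with hS₂
  have hdisj : Disjoint S₁ S₂ := by
    simp only [hS₁, hS₂, Finset.disjoint_filter]
    intro pr _ h1 h2
    exact absurd h2.2 (not_lt.mpr h1.2)
  have hcard : S₁.card + S₂.card ≤ d * 2 ^ n := by
    rw [← Finset.card_union_of_disjoint hdisj]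
    calc (S₁ ∪ S₂).card ≤ (Finset.univ : Finset (Fin d × (Fin n → Bool))).card :=
          Finset.card_le_card (Finset.subset_univ _)
      _ = d * 2 ^ n := by simp [Fintype.card_fun]
  let e₁ : Fin S₁.card ≃ {pr // pr ∈ S₁} := S₁.equivFin.symm
  let e₂ : Fin S₂.card ≃ {pr // pr ∈ S₂} := S₂.equivFin.symm
  set a : Fin S₁.card → ℝ := fun i => θ ((e₁ i) : Fin d × (Fin n → Bool)).1 with ha
  set b : Fin S₂.card → ℝ := fun j => -θ ((e₂ j) : Fin d × (Fin n → Bool)).1 with hb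
  set p : Fin S₁.card → (Fin n → Bool) := fun i => ((e₁ i) : Fin d × (Fin n → Bool)).2 with hp
  set q : Fin S₂.card → (Fin n → Bool) := fun j => ((e₂ j) : Fin d × (Fin n → Bool)).2 with hq
  set c : ℝ := ∑ pr ∈ S₂, θ pr.1 with hc
  have hmain : ∀ x : Fin n → Bool,
      ∑ i : Fin d, θ i * (if φ x i = true then (1 : ℝ) else 0)
        = ((∑ i : Fin S₁.card, a i * (if x = p i then (1 : ℝ) else 0))
            + ∑ j : Fin S₂.card, b j * (if x = q j then (0 : ℝ) else 1)) + c := by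
    intro x
    have hsum1 : ∑ i : Fin S₁.card, a i * (if x = p i then (1:ℝ) else 0)
        = ∑ pr ∈ S₁, θ pr.1 * (if x = pr.2 then (1:ℝ) else 0) := by
      calc ∑ i : Fin S₁.card, a i * (if x = p i then (1:ℝ) else 0)
          = ∑ s : {pr // pr ∈ S₁}, θ (s : Fin d × (Fin n → Bool)).1 *
              (if x = (s : Fin d × (Fin n → Bool)).2 then (1:ℝ) else 0) :=
            Equiv.sum_comp e₁ (fun s => θ (s : Fin d × (Fin n → Bool)).1 *
              (if x = (s : Fin d × (Fin n → Bool)).2 then (1:ℝ) else 0))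
        _ = ∑ pr ∈ S₁, θ pr.1 * (if x = pr.2 then (1:ℝ) else 0) :=
            Finset.sum_coe_sort S₁ (fun pr => θ pr.1 * (if x = pr.2 then (1:ℝ) else 0))
    have hsum2 : ∑ j : Fin S₂.card, b j * (if x = q j then (0:ℝ) else 1)
        = ∑ pr ∈ S₂, (-θ pr.1) * (if x = pr.2 then (0:ℝ) else 1) := by
      calc ∑ j : Fin S₂.card, b j * (if x = q j then (0:ℝ) else 1)
          = ∑ s : {pr // pr ∈ S₂}, (-θ (s : Fin d × (Fin n → Bool)).1) *
              (if x = (s : Fin d × (Fin n → Bool)).2 then (0:ℝ) else 1) :=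
            Equiv.sum_comp e₂ (fun s => (-θ (s : Fin d × (Fin n → Bool)).1) *
              (if x = (s : Fin d × (Fin n → Bool)).2 then (0:ℝ) else 1))
        _ = ∑ pr ∈ S₂, (-θ pr.1) * (if x = pr.2 then (0:ℝ) else 1) :=
            Finset.sum_coe_sort S₂ (fun pr => (-θ pr.1) * (if x = pr.2 then (0:ℝ) else 1))
    rw [hsum1, hsum2]
    have key : ∑ i : Fin d, θ i * (if φ x i = true then (1:ℝ) else 0)
        = (∑ pr ∈ S₁, θ pr.1 * (if x = pr.2 then (1:ℝ) else 0))
          + ∑ pr ∈ S₂, θ pr.1 * (if x = pr.2 then (1:ℝ) else 0) := by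
      rw [← Finset.sum_union hdisj]
      have hun : S₁ ∪ S₂ = Finset.univ.filter (fun pr : Fin d × (Fin n → Bool) => φ pr.2 pr.1 = true) := by
        rw [hS₁, hS₂, ← Finset.filter_or]
        apply Finset.filter_congr
        intro pr _
        constructor
        · rintro (⟨h, _⟩ | ⟨h, _⟩) <;> exact h
        · intro h; rcases le_or_gt 0 (θ pr.1) with h' | h'
          · exact Or.inl ⟨h, h'⟩
          · exact Or.inr ⟨h, h'⟩
      rw [hun, Finset.sum_filter]
      rw [Fintype.sum_prod_type]
      apply Finset.sum_congr rfl
      intro i _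
      have hpt : ∀ x' : Fin n → Bool,
          (if φ x' i = true then θ i * (if x = x' then (1:ℝ) else 0) else 0)
          = (if x = x' then (if φ x' i = true then θ i else 0) else 0) := by
        intro x'
        by_cases h1 : φ x' i = true <;> by_cases h2 : x = x' <;> simp [h1, h2]
      simp only [hpt]
      rw [Finset.sum_ite_eq]
      simp
    rw [key]
    have hsub : ∑ pr ∈ S₂, (-θ pr.1) * (if x = pr.2 then (0:ℝ) else 1)
        = (∑ pr ∈ S₂, θ pr.1 * (if x = pr.2 then (1:ℝ) else 0)) - ∑ pr ∈ S₂, θ pr.1 := by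
      rw [← Finset.sum_sub_distrib]
      apply Finset.sum_congr rfl
      intro pr _
      by_cases h : x = pr.2 <;> simp [h]
    rw [hsub, hc]; ring
  refine ⟨S₁.card, S₂.card, hcard, a, b, p, q, c, ?_, ?_, hmain, ?_⟩
  · intro i
    exact (Finset.mem_filter.mp (e₁ i).2).2.2
  · intro j
    have h2 := (Finset.mem_filter.mp (e₂ j).2).2.2
    show (0:ℝ) ≤ -θ ((e₂ j) : Fin d × (Fin n → Bool)).1
    linarith
  · intro x
    exact gibbs_eq
      (fun y => (∑ i : Fin S₁.card, a i * (if y = p i then (1 : ℝ) else 0))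
          + ∑ j : Fin S₂.card, b j * (if y = q j then (0 : ℝ) else 1))
      (fun y => ∑ i : Fin d, θ i * (if φ y i = true then (1 : ℝ) else 0))
      c hmain x
end
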